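/- With the setting of the random batch estimator (disjoint sets $S_i$ covering $X$, batches $\mathcal{B}_j$ with probabilities $p_j$, inclusion probabilities $\pi_i = \sum_{j: i\in\mathcal{B}_j} p_j > 0$), let $\pi_* = \min_i \pi_i$ and define $\rho_\omega(x) = 1 - \sum_{i\in\mathcal{B}_\omega} \mathbf{1}_{S_i}(x)/\pi_i$. Then for every $x \in X$, $\mathbb{E}[|\rho_\omega(x)|^2] \le \frac{1}{\pi_*} - 1$. -/

import Mathlib

/-!
Since the `S i` partition `X`, the point `x` lies in exactly one `S i₀`, so `ρ_ω(x)` depends on `ω`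
only through whether the batch `B ω` contains `i₀`: it equals `1 - 1/π i₀` with probability `π i₀`
and `1` otherwise. Its second moment is therefore
`π i₀ (1 - 1/π i₀)² + (1 - π i₀) = 1/π i₀ - 1 ≤ 1/π_* - 1`.
-/

open MeasureTheory

theorem MeasureTheory.integral_comp_eq_sum_measureReal_preimage {ι Ω E : Type*} [Fintype ι]
    [MeasurableSpace ι] [MeasurableSingletonClass ι] [MeasurableSpace Ω]
    [NormedAddCommGroup E] [NormedSpace ℝ E] [CompleteSpace E]
    (P : Measure Ω) [IsFiniteMeasure P] {ω : Ω → ι} (hω : Measurable ω) (g : ι → E) :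
    ∫ a, g (ω a) ∂P = ∑ j, P.real (ω ⁻¹' {j}) • g j := by
  rw [← integral_map hω.aemeasurable StronglyMeasurable.of_discrete.aestronglyMeasurable,
    integral_fintype .of_finite]
  simp_rw [map_measureReal_apply hω (measurableSet_singleton _)]

theorem Set.indicator_apply_eq_ite_of_pairwise_disjoint {ι X M : Type*} [Zero M] [DecidableEq ι]
    {S : ι → Set X} (hS : Pairwise (Function.onFun Disjoint S)) {i₀ : ι} {x : X}
    (hx : x ∈ S i₀) (f : X → M) (i : ι) :
    (S i).indicator f x = if i = i₀ then f x else 0 := by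
  split_ifs with h
  · exact Set.indicator_of_mem (h ▸ hx) f
  · exact Set.indicator_of_notMem (fun hi => (hS h).ne_of_mem hi hx rfl) f

theorem Finset.sum_mul_sq_one_sub_ite_div {ι : Type*} [Fintype ι] (p : ι → ℝ)
    (hp : ∑ j, p j = 1) (A : ι → Prop) [DecidablePred A] {q : ℝ}
    (hq : q = ∑ j ∈ univ.filter A, p j) (hq0 : q ≠ 0) :
    ∑ j, p j * (1 - if A j then 1 / q else 0) ^ 2 = 1 / q - 1 := by
  have hcompl : ∑ j ∈ univ.filter (¬ A ·), p j = 1 - q := by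
    rw [hq, ← hp, ← sum_filter_add_sum_filter_not univ A]; ring
  simp_rw [apply_ite (fun c : ℝ => (1 - c) ^ 2), mul_ite, sum_ite, ← sum_mul, ← hq, hcompl]
  field_simp
  ring

theorem rbm_variance_bound_general
    {M N : ℕ} (hM : 0 < M)
    (B : Fin N → Finset (Fin M))
    (p : Fin N → ℝ) (hp : ∀ j, p j ∈ Set.Ioo (0:ℝ) 1)
    (hpsum : ∑ j, p j = 1)
    (π : Fin M → ℝ)
    (hπ : ∀ i, π i = ∑ j ∈ Finset.univ.filter (fun j => i ∈ B j), p j)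
    (hπpos : ∀ i, 0 < π i)
    {X : Type*}
    (S : Fin M → Set X)
    (hSdisj : Pairwise (Function.onFun Disjoint S))
    (hScover : (⋃ i, S i) = Set.univ)
    {Ω : Type*} [MeasurableSpace Ω] (P : Measure Ω) [IsProbabilityMeasure P]
    (ω : Ω → Fin N) (hωmeas : Measurable ω)
    (hωlaw : ∀ j, P {a | ω a = j} = ENNReal.ofReal (p j))
    (x : X) :
    ∫ a, |1 - ∑ i ∈ B (ω a), Set.indicator (S i) (fun _ => (1:ℝ)) x / π i| ^ 2 ∂P
      ≤ 1 / (Finset.univ.inf' (Finset.univ_nonempty_iff.mpr ⟨⟨0, hM⟩⟩) π) - 1 := by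
  obtain ⟨i₀, hx⟩ : ∃ i, x ∈ S i := Set.mem_iUnion.mp (hScover ▸ Set.mem_univ x)
  have hρ : ∀ j, |1 - ∑ i ∈ B j, (S i).indicator (fun _ => (1:ℝ)) x / π i| ^ 2
      = (1 - if i₀ ∈ B j then 1 / π i₀ else 0) ^ 2 := fun j => by
    simp_rw [sq_abs, Set.indicator_apply_eq_ite_of_pairwise_disjoint hSdisj hx, ite_div, zero_div,
      Finset.sum_ite_eq']
  calc ∫ a, |1 - ∑ i ∈ B (ω a), (S i).indicator (fun _ => (1:ℝ)) x / π i| ^ 2 ∂P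
      = ∑ j, p j * (1 - if i₀ ∈ B j then 1 / π i₀ else 0) ^ 2 := by
        simp_rw [hρ]
        refine (integral_comp_eq_sum_measureReal_preimage P hωmeas
          fun j => (1 - if i₀ ∈ B j then 1 / π i₀ else 0) ^ 2).trans ?_
        simp_rw [smul_eq_mul, measureReal_def, Set.preimage, Set.mem_singleton_iff, hωlaw,
          ENNReal.toReal_ofReal (hp _).1.le]
    _ = 1 / π i₀ - 1 :=
        Finset.sum_mul_sq_one_sub_ite_div p hpsum (i₀ ∈ B ·) (hπ i₀) (hπpos i₀).ne'
    _ ≤ _ := by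
        gcongr
        · exact (Finset.lt_inf'_iff _).mpr fun i _ => hπpos i
        · exact Finset.inf'_le _ (Finset.mem_univ i₀)

/-- Second-moment bound for the random batch deviation
`ρ_ω(x) = 1 - ∑_{i ∈ B_ω} 1_{S_i}(x)/π_i`:  `E[|ρ_ω(x)|²] ≤ 1/π_* - 1`. -/
theorem rbm_variance_bound
    {M N : ℕ} (hM : 0 < M) (hN : 0 < N)
    (B : Fin N → Finset (Fin M))
    (hBne : ∀ j, (B j).Nonempty)
    (hBcover : ∀ i : Fin M, ∃ j, i ∈ B j)
    (p : Fin N → ℝ) (hp : ∀ j, p j ∈ Set.Ioo (0:ℝ) 1)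
    (hpsum : ∑ j, p j = 1)
    (π : Fin M → ℝ)
    (hπ : ∀ i, π i = ∑ j ∈ Finset.univ.filter (fun j => i ∈ B j), p j)
    (hπpos : ∀ i, 0 < π i)
    {X : Type*} [MeasurableSpace X]
    (S : Fin M → Set X) (hSmeas : ∀ i, MeasurableSet (S i))
    (hSdisj : Pairwise (Function.onFun Disjoint S))
    (hScover : (⋃ i, S i) = Set.univ)
    {Ω : Type*} [MeasurableSpace Ω] (P : Measure Ω) [IsProbabilityMeasure P]
    (ω : Ω → Fin N) (hωmeas : Measurable ω)
    (hωlaw : ∀ j, P {a | ω a = j} = ENNReal.ofReal (p j))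
    (x : X) :
    ∫ a, |1 - ∑ i ∈ B (ω a), Set.indicator (S i) (fun _ => (1:ℝ)) x / π i| ^ 2 ∂P
      ≤ 1 / (Finset.univ.inf' (Finset.univ_nonempty_iff.mpr ⟨⟨0, hM⟩⟩) π) - 1 :=
  rbm_variance_bound_general hM B p hp hpsum π hπ hπpos S hSdisj hScover P ω hωmeas hωlaw x
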